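/- arXiv:1906.07503 — 2 statements merged into one kernel-verified Lean document; each statement's English description precedes it below -/
import Mathlib

section
/- Let 𝒢 be a finite directed graph and λ > 1 such that every strongly connected component of 𝒢 has adjacency matrix of spectral radius strictly less than λ. Then there exists ε > 0 such that the total number of directed paths of length n in 𝒢 is O((λ − ε)ⁿ) as n → ∞. -/
open scoped Classical BigOperators ENNReal
open MeasureTheory

noncomputable section

namespace Paper

/-! ### Word metric and hyperbolicity -/

variable {G : Type*} [Group G]

/-- The word length of `g` with respect to a generating set `S`. -/
def wordLength (S : Set G) (g : G) : ℕ :=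
  sInf {n | ∃ l : List G, l.length = n ∧ (∀ x ∈ l, x ∈ S) ∧ l.prod = g}

/-- The word metric on `G` determined by `S`. -/
def wordDist (S : Set G) (g h : G) : ℕ :=
  wordLength S (g⁻¹ * h)

/-- A discrete geodesic segment of length `n` in the Cayley graph. -/
def IsGeodesicSeg (S : Set G) (γ : ℕ → G) (n : ℕ) : Prop :=
  ∀ i, i ≤ n → ∀ j, j ≤ n → (wordDist S (γ i) (γ j) : ℤ) = |(i : ℤ) - (j : ℤ)|

/-- A discrete geodesic of length `n` from `a` to `b` in the Cayley graph. -/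
def GeodesicFrom (S : Set G) (γ : ℕ → G) (n : ℕ) (a b : G) : Prop :=
  IsGeodesicSeg S γ n ∧ γ 0 = a ∧ γ n = b ∧ n = wordDist S a b

/-- The side `γ` is contained in the `δ`-neighbourhood of the union of `γ₁` and `γ₂`. -/
def SideThin (S : Set G) (δ : ℝ) (γ : ℕ → G) (n : ℕ) (γ₁ : ℕ → G) (n₁ : ℕ)
    (γ₂ : ℕ → G) (n₂ : ℕ) : Prop :=
  ∀ i, i ≤ n →
    (∃ j, j ≤ n₁ ∧ (wordDist S (γ i) (γ₁ j) : ℝ) ≤ δ) ∨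
    (∃ j, j ≤ n₂ ∧ (wordDist S (γ i) (γ₂ j) : ℝ) ≤ δ)

/-- `G` is hyperbolic with respect to `S`: every geodesic triangle in the Cayley graph is
`δ`-thin, i.e. each side is contained in the `δ`-neighbourhood of the other two sides. -/
def IsHyperbolic (S : Set G) : Prop :=
  ∃ δ : ℝ, 0 ≤ δ ∧ ∀ (a b c : G) (γ₁ γ₂ γ₃ : ℕ → G) (n₁ n₂ n₃ : ℕ),
    GeodesicFrom S γ₁ n₁ a b → GeodesicFrom S γ₂ n₂ b c → GeodesicFrom S γ₃ n₃ a c →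
    SideThin S δ γ₁ n₁ γ₂ n₂ γ₃ n₃ ∧ SideThin S δ γ₂ n₂ γ₁ n₁ γ₃ n₃ ∧
      SideThin S δ γ₃ n₃ γ₁ n₁ γ₂ n₂

/-- `G` is non-elementary: it contains no cyclic subgroup of finite index. -/
def NonElementary (G : Type*) [Group G] : Prop :=
  ¬ ∃ g : G, (Subgroup.zpowers g).FiniteIndex

/-- `S` is a symmetric subset of `G`. -/
def SymmetricSet (S : Set G) : Prop := ∀ g ∈ S, g⁻¹ ∈ S

/-- `#W_n`, the number of elements of `G` of word length `n`. -/
def Wcard (S : Set G) (n : ℕ) : ℕ := Nat.card {g : G // wordLength S g = n}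

/-- `#(W_n ∩ N)`, the number of elements of `N` of word length `n`. -/
def WNcard (S : Set G) (N : Subgroup G) (n : ℕ) : ℕ :=
  Nat.card {g : G // wordLength S g = n ∧ g ∈ N}

/-- Coornaert's purely exponential growth property: `C₁ λ^n ≤ #W_n ≤ C₂ λ^n`. -/
def HasGrowthRate (S : Set G) (lam : ℝ) : Prop :=
  ∃ C₁ C₂ : ℝ, 0 < C₁ ∧ 0 < C₂ ∧ ∀ n : ℕ, 1 ≤ n →
    C₁ * lam ^ n ≤ (Wcard S n : ℝ) ∧ (Wcard S n : ℝ) ≤ C₂ * lam ^ n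

/-! ### Strongly Markov structures -/

/-- The directed paths in the graph with edge set `E ⊆ V × V` starting at the vertex `star`;
a path with `n` edges is recorded by its `n+1` successive vertices. -/
def MarkovPaths (V : Type*) (E : Set (V × V)) (star : V) : Type _ :=
  {p : Σ n : ℕ, Fin (n + 1) → V //
    p.2 0 = star ∧ ∀ i : Fin p.1, (p.2 i.castSucc, p.2 i.succ) ∈ E}

/-- The group element obtained by multiplying the labels along a path. -/
def pathProd {V : Type*} {E : Set (V × V)} {star : V} (lab : V × V → G)
    (p : MarkovPaths V E star) : G :=
  (List.ofFn fun i : Fin p.1.1 => lab (p.1.2 i.castSucc, p.1.2 i.succ)).prod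

/-- A strongly Markov coding of `(G, S)`: a finite directed graph with labels in `S`,
an initial vertex `star` with no incoming edges, such that reading labels along paths
starting at `star` gives a bijection with `G` under which an `n`-edge path corresponds
to an element of word length `n`. -/
def IsMarkovCoding (S : Set G) {V : Type*} (E : Set (V × V)) (star : V)
    (lab : V × V → G) : Prop :=
  (∀ e ∈ E, lab e ∈ S) ∧ (∀ u : V, (u, star) ∉ E) ∧
  Function.Bijective (fun p : MarkovPaths V E star => pathProd lab p) ∧
  ∀ p : MarkovPaths V E star, wordLength S (pathProd lab p) = p.1.1

/-! ### Directed graphs, components and spectral radii -/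

/-- Reachability by a directed path in the graph with edge set `E`. -/
def Reach {V : Type*} (E : Set (V × V)) (u v : V) : Prop :=
  Relation.ReflTransGen (fun a b => (a, b) ∈ E) u v

/-- The strongly connected component of the vertex `u`. -/
def SCC {V : Type*} (E : Set (V × V)) (u : V) : Set V :=
  {v | Reach E u v ∧ Reach E v u}

/-- The 0-1 adjacency (transition) matrix of the graph with edge set `E`. -/
def adjMatrix (V : Type*) (E : Set (V × V)) : Matrix V V ℝ :=
  fun u v => if (u, v) ∈ E then 1 else 0

/-- The restriction (principal submatrix) of `M` to a set `s` of indices. -/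
def restrict {V : Type*} (M : Matrix V V ℝ) (s : Set V) : Matrix s s ℝ :=
  fun u v => M u.1 v.1

/-- The spectral radius of a real matrix: the maximum modulus of its complex eigenvalues. -/
def specRad {n : Type*} [Fintype n] [DecidableEq n] (M : Matrix n n ℝ) : ℝ≥0∞ :=
  spectralRadius ℂ (M.map Complex.ofReal)

/-- The spectral radius of a complex matrix. -/
def specRadC {n : Type*} [Fintype n] [DecidableEq n] (M : Matrix n n ℂ) : ℝ≥0∞ :=
  spectralRadius ℂ M

/-- `u` belongs to a maximal component: the strongly connected component of `u` has
adjacency matrix of spectral radius `lam`. -/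
def IsMaxComp {V : Type*} [Fintype V] (E : Set (V × V)) (lam : ℝ) (u : V) : Prop :=
  specRad (restrict (adjMatrix V E) (SCC E u)) = ENNReal.ofReal lam

/-- The collection of maximal components of the graph. -/
def MaxComps {V : Type*} [Fintype V] (E : Set (V × V)) (lam : ℝ) : Set (Set V) :=
  {s | ∃ u, IsMaxComp E lam u ∧ s = SCC E u}

/-- The matrix `C_j` associated to the maximal component `s`: entries meeting a maximal
component different from `s` are set to zero. -/
def Cmat {V : Type*} [Fintype V] (E : Set (V × V)) (lam : ℝ) (s : Set V) :
    Matrix V V ℝ := fun u v =>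
  if ∃ w, IsMaxComp E lam w ∧ SCC E w ≠ s ∧ (u ∈ SCC E w ∨ v ∈ SCC E w) then 0
  else adjMatrix V E u v

/-- The pairing `⟨t, x⟩ = ∑ i, t i * x i` of `t ∈ ℝ^ν` with `x ∈ ℤ^ν`. -/
def pairing {ν : ℕ} (t : Fin ν → ℝ) (x : Fin ν → ℤ) : ℝ :=
  ∑ i, t i * (x i : ℝ)

/-- `e2πi x = e^{2 π i x}`. -/
def e2πi (x : ℝ) : ℂ := Complex.exp (((2 * Real.pi * x : ℝ) : ℂ) * Complex.I)

/-- The weighted matrix `C_j(t)`, with entries `e^{2πi⟨t, f(u,v)⟩} C_j(u,v)`. -/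
def Ct {V : Type*} [Fintype V] (E : Set (V × V)) (lam : ℝ) (s : Set V) {ν : ℕ}
    (f : V × V → (Fin ν → ℤ)) (t : Fin ν → ℝ) : Matrix V V ℂ :=
  fun u v => e2πi (pairing t (f (u, v))) * (Cmat E lam s u v : ℂ)

/-- `⟨M v_*, 𝟏⟩`, where `v_*` is the indicator vector of `star` and `𝟏` the all-ones vector. -/
def starPairing {V : Type*} [Fintype V] (M : Matrix V V ℂ) (star : V) : ℂ :=
  dotProduct (fun _ : V => (1 : ℂ))
    (M.mulVec (fun v : V => if v = star then 1 else 0))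

/-! ### Cycles, weights, and the groups `Γ_f` and `Δ_f` -/

/-- A cycle of length `k ≥ 1` through vertices of `s`, recorded as `x 0, x 1, …, x k`
with `x 0 = x k` and all steps along edges of `E`. -/
def IsCycleIn {V : Type*} (E : Set (V × V)) (s : Set V) (k : ℕ) (x : ℕ → V) : Prop :=
  0 < k ∧ (∀ i, i ≤ k → x i ∈ s) ∧ x 0 = x k ∧ ∀ i, i < k → (x i, x (i + 1)) ∈ E

/-- The `f`-weight of a cycle. -/
def cycleWeight {V : Type*} {ν : ℕ} (f : V × V → (Fin ν → ℤ)) (k : ℕ) (x : ℕ → V) :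
    Fin ν → ℤ :=
  ∑ i ∈ Finset.range k, f (x i, x (i + 1))

/-- `p` is the period: the greatest common divisor of the lengths of the cycles in `s`. -/
def IsPeriod {V : Type*} (E : Set (V × V)) (s : Set V) (p : ℕ) : Prop :=
  0 < p ∧ (∀ k x, IsCycleIn E s k x → p ∣ k) ∧
    ∀ q : ℕ, (∀ k x, IsCycleIn E s k x → q ∣ k) → q ∣ p

/-- `Γ_f`: the subgroup of `ℤ^ν` generated by the `f`-weights of cycles. -/
def GammaGroup {V : Type*} (E : Set (V × V)) (s : Set V) {ν : ℕ}
    (f : V × V → (Fin ν → ℤ)) : AddSubgroup (Fin ν → ℤ) :=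
  AddSubgroup.closure {w | ∃ k x, IsCycleIn E s k x ∧ w = cycleWeight f k x}

/-- `Δ_f`: the subgroup of differences of `f`-weights of cycles of equal length. -/
def DeltaGroup {V : Type*} (E : Set (V × V)) (s : Set V) {ν : ℕ}
    (f : V × V → (Fin ν → ℤ)) : AddSubgroup (Fin ν → ℤ) :=
  AddSubgroup.closure {w | ∃ k x y, IsCycleIn E s k x ∧ IsCycleIn E s k y ∧
    w = cycleWeight f k x - cycleWeight f k y}

/-- The edge set of a nonnegative matrix `B`. -/
def Bedges {V : Type*} (B : Matrix V V ℝ) : Set (V × V) := {e | B e.1 e.2 ≠ 0}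

/-! A nonzero eigenvector of the adjacency matrix `A` has a support vertex `u` whose
reachability set is minimal among support vertices; every support vertex reachable from `u`
then lies in the strongly connected component of `u`, so the eigenvector restricted to that
component is an eigenvector of its block. Hence the spectral radius of `A` is at most the
largest spectral radius of a component, and is below some `c < λ`. The number of paths of
length `n` is the sum of the entries of `Aⁿ`, which is `O(cⁿ)` by Gelfand's formula. -/

open Filter Asymptotics Matrix

theorem mem_SCC_self {V : Type*} (E : Set (V × V)) (u : V) : u ∈ SCC E u :=
  ⟨Relation.ReflTransGen.refl, Relation.ReflTransGen.refl⟩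

theorem exists_forall_reach_imp_reach {V : Type*} [Finite V] (E : Set (V × V)) (P : V → Prop)
    (hP : ∃ u, P u) : ∃ u, P u ∧ ∀ j, P j → Reach E u j → Reach E j u := by
  obtain ⟨u, hu, hmin⟩ := exists_minimalFor_of_wellFoundedLT P (fun u => {w | Reach E u w}) hP
  exact ⟨u, hu, fun j hj huj => hmin hj (fun w hw => huj.trans hw) Relation.ReflTransGen.refl⟩

theorem Matrix.mem_spectrum_iff_exists_mulVec_eq_smul {K n : Type*} [Field K] [Fintype n]
    [DecidableEq n] (N : Matrix n n K) (μ : K) :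
    μ ∈ spectrum K N ↔ ∃ v, v ≠ 0 ∧ N *ᵥ v = μ • v := by
  rw [← Matrix.spectrum_toLin', ← Module.End.hasEigenvalue_iff_mem_spectrum]
  constructor
  · intro h
    obtain ⟨v, hv⟩ := h.exists_hasEigenvector
    exact ⟨v, hv.2, by simpa using hv.apply_eq_smul⟩
  · rintro ⟨v, hv0, hv⟩
    exact Module.End.hasEigenvalue_of_hasEigenvector
      (Module.End.hasEigenvector_iff.2 ⟨by simpa [Module.End.mem_eigenspace_iff] using hv, hv0⟩)

theorem Matrix.submatrix_val_mulVec {R V : Type*} [NonUnitalNonAssocSemiring R] [Fintype V]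
    (N : Matrix V V R) (s : Set V) [DecidablePred (· ∈ s)] (v : V → R)
    (h : ∀ i ∈ s, ∀ j ∉ s, N i j * v j = 0) :
    (N.submatrix (↑) (↑) : Matrix s s R) *ᵥ (fun i : s => v i) =
      fun i : s => (N *ᵥ v) i := by
  funext i
  simp only [mulVec, dotProduct, submatrix_apply]
  rw [← Fintype.sum_subtype_add_sum_subtype (· ∈ s) fun j => N i j * v j,
    Fintype.sum_eq_zero (fun j : {j // j ∉ s} => N i j * v j) fun j => h i i.2 j j.2, add_zero]

theorem spectrum_subset_iUnion_spectrum_submatrix_SCC {K V : Type*} [Field K] [Fintype V]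
    [DecidableEq V] (E : Set (V × V)) (N : Matrix V V K) (hN : ∀ i j, N i j ≠ 0 → (i, j) ∈ E) :
    spectrum K N ⊆ ⋃ u, spectrum K (N.submatrix (↑) (↑) : Matrix (SCC E u) (SCC E u) K) := by
  intro μ hμ
  obtain ⟨v, hv0, hv⟩ := (Matrix.mem_spectrum_iff_exists_mulVec_eq_smul N μ).1 hμ
  obtain ⟨u, hu, hclosed⟩ :=
    exists_forall_reach_imp_reach E (fun j => v j ≠ 0) (Function.ne_iff.1 hv0)
  have hout : ∀ i ∈ SCC E u, ∀ j ∉ SCC E u, N i j * v j = 0 := by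
    intro i hi j hj
    by_contra h
    obtain ⟨hNij, hvj⟩ := mul_ne_zero_iff.1 h
    have huj : Reach E u j := hi.1.tail (hN i j hNij)
    exact hj ⟨huj, hclosed j hvj huj⟩
  refine Set.mem_iUnion.2 ⟨u, (Matrix.mem_spectrum_iff_exists_mulVec_eq_smul _ μ).2
    ⟨fun i => v i, fun h => hu (congrFun h ⟨u, mem_SCC_self E u⟩), ?_⟩⟩
  rw [Matrix.submatrix_val_mulVec N _ v hout, hv]
  rfl

theorem spectralRadius_le_sup_SCC {𝕜 V : Type*} [NormedField 𝕜] [Fintype V] [DecidableEq V]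
    (E : Set (V × V)) (N : Matrix V V 𝕜) (hN : ∀ i j, N i j ≠ 0 → (i, j) ∈ E) :
    spectralRadius 𝕜 N ≤ Finset.univ.sup fun u =>
      spectralRadius 𝕜 (N.submatrix (↑) (↑) : Matrix (SCC E u) (SCC E u) 𝕜) :=
  iSup₂_le fun μ hμ => by
    obtain ⟨u, hu⟩ :=
      Set.mem_iUnion.1 (spectrum_subset_iUnion_spectrum_submatrix_SCC E N hN hμ)
    exact (le_iSup₂ (f := fun k (_ : k ∈ spectrum 𝕜 _) => (‖k‖₊ : ℝ≥0∞)) μ hu).trans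
      (Finset.le_sup (f := fun u => spectralRadius 𝕜
        (N.submatrix (↑) (↑) : Matrix (SCC E u) (SCC E u) 𝕜)) (Finset.mem_univ u))

theorem isBigO_pow_of_spectralRadius_lt {A : Type*} [NormedRing A] [NormedAlgebra ℂ A]
    [CompleteSpace A] (a : A) {c : ℝ} (h : spectralRadius ℂ a < ENNReal.ofReal c) :
    (fun n : ℕ => a ^ n) =O[atTop] fun n => c ^ n := by
  refine IsBigO.of_norm_eventuallyLE ?_
  filter_upwards [(spectrum.pow_norm_pow_one_div_tendsto_nhds_spectralRadius a).eventually_lt_const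
    h, eventually_ne_atTop 0] with n hn hn0
  have hroot : ‖a ^ n‖ ^ (1 / n : ℝ) < c := (ENNReal.ofReal_lt_ofReal_iff'.1 hn).1
  calc ‖a ^ n‖ = (‖a ^ n‖ ^ (1 / n : ℝ)) ^ n := by
        rw [one_div, Real.rpow_inv_natCast_pow (norm_nonneg _) hn0]
    _ ≤ c ^ n := pow_le_pow_left₀ (by positivity) hroot.le n

theorem Matrix.isBigO_pow_apply_of_spectralRadius_lt {ι : Type*} [Fintype ι] [DecidableEq ι]
    (A : Matrix ι ι ℂ) {c : ℝ} (h : spectralRadius ℂ A < ENNReal.ofReal c) (i j : ι) :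
    (fun n : ℕ => (A ^ n) i j) =O[atTop] fun n => c ^ n := by
  let _ : NormedRing (Matrix ι ι ℂ) := Matrix.linftyOpNormedRing
  let _ : NormedAlgebra ℂ (Matrix ι ι ℂ) := Matrix.linftyOpNormedAlgebra
  have : CompleteSpace (Matrix ι ι ℂ) := FiniteDimensional.complete ℂ _
  exact ((entryLinearMap ℂ ℂ i j).toContinuousLinearMap.isBigO_comp _ atTop).trans
    (isBigO_pow_of_spectralRadius_lt A h)

theorem Matrix.sum_mul_prod_mul_eq_dotProduct_pow_mulVec {R V : Type*} [CommSemiring R]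
    [Fintype V] [DecidableEq V] (M : Matrix V V R) (n : ℕ) (g w : V → R) :
    ∑ x : Fin (n + 1) → V,
      g (x 0) * (∏ i : Fin n, M (x i.castSucc) (x i.succ)) * w (x (Fin.last n)) =
      g ⬝ᵥ (M ^ n *ᵥ w) := by
  induction n generalizing g with
  | zero =>
    rw [← (Equiv.funUnique (Fin 1) V).symm.sum_comp]
    simp [dotProduct]
  | succ n ih =>
    rw [← (Fin.consEquiv fun _ => V).sum_comp, Fintype.sum_prod_type, Finset.sum_comm]
    simp only [Fin.consEquiv_apply, Fin.cons_zero, Fin.prod_univ_succ, Fin.castSucc_zero,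
      Fin.cons_succ, ← Fin.succ_castSucc, ← Fin.succ_last]
    rw [pow_succ', ← mulVec_mulVec, dotProduct_mulVec, ← ih]
    refine Finset.sum_congr rfl fun y _ => ?_
    simp only [vecMul, dotProduct, Finset.sum_mul]
    exact Finset.sum_congr rfl fun a _ => by ring

theorem card_paths_eq_sum_pow_adjMatrix {V : Type*} [Fintype V] (E : Set (V × V)) (n : ℕ) :
    (Nat.card {x : Fin (n + 1) → V // ∀ i : Fin n, (x i.castSucc, x i.succ) ∈ E} : ℝ) =
      ∑ u, ∑ v, (adjMatrix V E ^ n) u v := by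
  have h := Matrix.sum_mul_prod_mul_eq_dotProduct_pow_mulVec (adjMatrix V E) n 1 1
  simp only [Pi.one_apply, one_mul, mul_one, adjMatrix, Finset.prod_boole, Finset.sum_boole,
    Finset.mem_univ, true_implies] at h
  rw [Nat.card_eq_fintype_card, Fintype.card_subtype, h]
  simp [dotProduct, mulVec]

theorem isBigO_card_paths {V : Type*} [Fintype V] (E : Set (V × V)) {c : ℝ}
    (h : spectralRadius ℂ ((adjMatrix V E).map Complex.ofReal) < ENNReal.ofReal c) :
    (fun n => (Nat.card {x : Fin (n + 1) → V // ∀ i : Fin n, (x i.castSucc, x i.succ) ∈ E} : ℝ))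
      =O[atTop] fun n => c ^ n := by
  simp_rw [card_paths_eq_sum_pow_adjMatrix]
  refine IsBigO.fun_sum fun u _ => IsBigO.fun_sum fun v _ => ?_
  refine (isBigO_of_le _ fun n => ?_).trans
    (Matrix.isBigO_pow_apply_of_spectralRadius_lt _ h u v)
  have hpow : (adjMatrix V E).map Complex.ofReal ^ n = (adjMatrix V E ^ n).map Complex.ofReal :=
    (Matrix.map_pow _ Complex.ofRealHom n).symm
  rw [hpow, map_apply, Complex.norm_real]

/-- Let `𝒢` be a finite directed graph all of whose strongly connected
components have adjacency matrix of spectral radius strictly less than `λ > 1`. Then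
there is `ε > 0` such that the total number of directed paths of length `n` in `𝒢` is
`O((λ − ε)ⁿ)`. -/
theorem statement6 {V : Type*} [Fintype V] (E : Set (V × V))
    (lam : ℝ) (hlam : 1 < lam)
    (hcomp : ∀ u : V, specRad (restrict (adjMatrix V E) (SCC E u)) < ENNReal.ofReal lam) :
    ∃ ε : ℝ, 0 < ε ∧ ∃ K : ℝ, 0 < K ∧ ∀ n : ℕ,
      (Nat.card {x : Fin (n + 1) → V //
          ∀ i : Fin n, (x i.castSucc, x i.succ) ∈ E} : ℝ) ≤ K * (lam - ε) ^ n := by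
  have hρ : spectralRadius ℂ ((adjMatrix V E).map Complex.ofReal) < ENNReal.ofReal lam := by
    refine (spectralRadius_le_sup_SCC E _ fun i j hij => ?_).trans_lt
      ((Finset.sup_lt_iff (ENNReal.ofReal_pos.2 (by linarith))).2 fun u _ => hcomp u)
    by_contra h
    simp [adjMatrix, h] at hij
  obtain ⟨c, -, hρc, hclam⟩ := ENNReal.lt_iff_exists_real_btwn.1 hρ
  have hc : 0 < c := ENNReal.ofReal_pos.1 (pos_of_gt hρc)
  obtain ⟨K, hK, hbound⟩ := bound_of_isBigO_nat_atTop (isBigO_card_paths E hρc)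
  refine ⟨lam - c, sub_pos.2 ((ENNReal.ofReal_lt_ofReal_iff (by linarith)).1 hclam), K, hK,
    fun n => ?_⟩
  simpa [sub_sub_cancel, abs_of_pos hc] using hbound (pow_ne_zero n hc.ne')

end Paper
end
end

section
/- Let B be an irreducible 0–1 square matrix with period p, with edge set E = {(u,v) : B(u,v) = 1}, and let f : E → ℤ^ν. Then every cycle of B has length a multiple of p, there exist cycles γ, γ′ with l(γ) − l(γ′) = p, and the quotient group Γ_f/Δ_f is cyclic, generated by the coset c + Δ_f where c = w_f(γ) − w_f(γ′) for any two cycles γ, γ′ with l(γ) − l(γ′) = p. -/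
open scoped Classical BigOperators ENNReal
open MeasureTheory

noncomputable section

namespace Paper

/-! ### Word metric and hyperbolicity -/

variable {G : Type*} [Group G]

/-! Fix a vertex `u`. The pairs (length, `f`-weight) of closed walks at `u` generate a subgroup
`D` of `ℤ × ℤ^ν`, every element of which is a difference of two closed walks. Going around a
cycle `γ` on a detour from `u`, minus the detour alone, shows `(l(γ), w_f(γ)) ∈ D`. The first
projection of `D` is a subgroup of `ℤ` containing every cycle length, so its generator divides
`p`; hence `p` is a difference of two closed-walk lengths. Finally, for cycles `γ₁, γ₂` with
`l(γ₁) = l(γ₂) + p` we get `(p, c) ∈ D`, and for a cycle `γ` of length `n p` the element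
`(l(γ), w_f(γ)) - n • (p, c) = (0, w_f(γ) - n • c)` of `D` is a difference of two closed walks of
equal length, i.e. lies in `Δ_f`. -/

theorem _root_.AddSubgroup.exists_sub_of_mem_closure {A : Type*} [AddCommGroup A] {S : Set A}
    (hS : S.Nonempty) (hadd : ∀ a ∈ S, ∀ b ∈ S, a + b ∈ S) {q : A}
    (hq : q ∈ AddSubgroup.closure S) : ∃ a ∈ S, ∃ b ∈ S, q = a - b := by
  obtain ⟨s, hs⟩ := hS
  induction hq using AddSubgroup.closure_induction with
  | mem a ha => exact ⟨a + s, hadd a ha s hs, s, hs, by abel⟩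
  | zero => exact ⟨s, hs, s, hs, by abel⟩
  | add _ _ _ _ h₁ h₂ =>
    obtain ⟨a, ha, b, hb, rfl⟩ := h₁
    obtain ⟨c, hc, d, hd, rfl⟩ := h₂
    exact ⟨a + c, hadd a ha c hc, b + d, hadd b hb d hd, by abel⟩
  | neg _ _ h =>
    obtain ⟨a, ha, b, hb, rfl⟩ := h
    exact ⟨b, hb, a, ha, by abel⟩

section Walks

variable {V : Type*} {E : Set (V × V)} {ν : ℕ}

def IsWalk (E : Set (V × V)) (n : ℕ) (x : ℕ → V) (u v : V) : Prop :=
  x 0 = u ∧ x n = v ∧ ∀ i < n, (x i, x (i + 1)) ∈ E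

theorem IsCycleIn.isWalk {s : Set V} {k : ℕ} {x : ℕ → V} (hx : IsCycleIn E s k x) :
    IsWalk E k x (x 0) (x 0) :=
  ⟨rfl, hx.2.2.1.symm, hx.2.2.2⟩

theorem IsWalk.isCycleIn {n : ℕ} {x : ℕ → V} {u : V} (hn : 0 < n) (hx : IsWalk E n x u u) :
    IsCycleIn E Set.univ n x :=
  ⟨hn, fun _ _ => Set.mem_univ _, hx.1.trans hx.2.1.symm, hx.2.2⟩

def walkAppend (m : ℕ) (x y : ℕ → V) : ℕ → V :=
  fun i => if i ≤ m then x i else y (i - m)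

theorem walkAppend_of_le {m i : ℕ} {x y : ℕ → V} (hi : i ≤ m) : walkAppend m x y i = x i :=
  if_pos hi

theorem walkAppend_add {m : ℕ} {x y : ℕ → V} (hxy : x m = y 0) (j : ℕ) :
    walkAppend m x y (m + j) = y j := by
  rcases j with _ | j
  · exact (walkAppend_of_le le_rfl).trans hxy
  · simp [walkAppend]

theorem IsWalk.append {m n : ℕ} {x y : ℕ → V} {u v w : V}
    (hx : IsWalk E m x u v) (hy : IsWalk E n y v w) :
    IsWalk E (m + n) (walkAppend m x y) u w := by
  have hxy : x m = y 0 := hx.2.1.trans hy.1.symm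
  refine ⟨(walkAppend_of_le m.zero_le).trans hx.1, (walkAppend_add hxy n).trans hy.2.1,
    fun i hi => ?_⟩
  rcases lt_or_ge i m with him | him
  · rw [walkAppend_of_le him.le, walkAppend_of_le him]
    exact hx.2.2 i him
  · obtain ⟨j, rfl⟩ := Nat.exists_eq_add_of_le him
    rw [walkAppend_add hxy, add_assoc, walkAppend_add hxy]
    exact hy.2.2 j (by omega)

theorem cycleWeight_walkAppend (f : V × V → Fin ν → ℤ) {m n : ℕ} {x y : ℕ → V}
    (hxy : x m = y 0) :
    cycleWeight f (m + n) (walkAppend m x y) = cycleWeight f m x + cycleWeight f n y := by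
  unfold cycleWeight
  rw [Finset.sum_range_add]
  congr 1
  · refine Finset.sum_congr rfl fun i hi => ?_
    rw [Finset.mem_range] at hi
    rw [walkAppend_of_le hi.le, walkAppend_of_le hi]
  · refine Finset.sum_congr rfl fun i _ => ?_
    rw [walkAppend_add hxy, add_assoc, walkAppend_add hxy]

theorem isWalk_of_mem {a b : V} (h : (a, b) ∈ E) :
    IsWalk E 1 (fun i => if i = 0 then a else b) a b :=
  ⟨rfl, rfl, fun i hi => by simpa [Nat.lt_one_iff.mp hi] using h⟩

theorem exists_isWalk_of_transGen {u v : V}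
    (h : Relation.TransGen (fun a b => (a, b) ∈ E) u v) : ∃ n x, 0 < n ∧ IsWalk E n x u v := by
  induction h with
  | single hab => exact ⟨1, _, one_pos, isWalk_of_mem hab⟩
  | tail _ hbc ih =>
    obtain ⟨n, x, hn, hx⟩ := ih
    exact ⟨n + 1, _, by omega, hx.append (isWalk_of_mem hbc)⟩

end Walks

section ClosedWalks

variable {V : Type*} {E : Set (V × V)} {ν : ℕ} (f : V × V → Fin ν → ℤ)

/-- Lengths are cast to `ℤ` so that the generated subgroup holds differences of closed walks. -/
def closedWalkData (E : Set (V × V)) (u : V) : Set (ℤ × (Fin ν → ℤ)) :=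
  {q | ∃ n x, 0 < n ∧ IsWalk E n x u u ∧ q = ((n : ℤ), cycleWeight f n x)}

variable {f}

theorem closedWalkData_add_mem {u : V} {a b : ℤ × (Fin ν → ℤ)}
    (ha : a ∈ closedWalkData f E u) (hb : b ∈ closedWalkData f E u) :
    a + b ∈ closedWalkData f E u := by
  obtain ⟨m, x, hm, hx, rfl⟩ := ha
  obtain ⟨n, y, hn, hy, rfl⟩ := hb
  refine ⟨m + n, _, by omega, hx.append hy, ?_⟩
  rw [cycleWeight_walkAppend f (hx.2.1.trans hy.1.symm)]
  simp

variable (hirr : ∀ u v : V, Relation.TransGen (fun a b => (a, b) ∈ E) u v)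
include hirr

theorem closedWalkData_nonempty (u : V) : (closedWalkData f E u).Nonempty := by
  obtain ⟨n, x, hn, hx⟩ := exists_isWalk_of_transGen (hirr u u)
  exact ⟨_, n, x, hn, hx, rfl⟩

theorem exists_sub_of_mem_closure_closedWalkData {u : V} {q : ℤ × (Fin ν → ℤ)}
    (hq : q ∈ AddSubgroup.closure (closedWalkData f E u)) :
    ∃ m x n y, IsCycleIn E Set.univ m x ∧ IsCycleIn E Set.univ n y ∧
      q = ((m : ℤ) - n, cycleWeight f m x - cycleWeight f n y) := by
  obtain ⟨_, ⟨m, x, hm, hx, rfl⟩, _, ⟨n, y, hn, hy, rfl⟩, rfl⟩ :=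
    AddSubgroup.exists_sub_of_mem_closure (closedWalkData_nonempty hirr u)
      (fun _ ha _ hb => closedWalkData_add_mem ha hb) hq
  exact ⟨m, x, n, y, hx.isCycleIn hm, hy.isCycleIn hn, rfl⟩

/-- Going around a cycle `x` on a detour `u → x 0 → u` differs from the bare detour by the
length and weight of `x`. -/
theorem mem_closure_closedWalkData {k : ℕ} {x : ℕ → V} (hx : IsCycleIn E Set.univ k x) (u : V) :
    ((k : ℤ), cycleWeight f k x) ∈ AddSubgroup.closure (closedWalkData f E u) := by
  obtain ⟨r, π, hr, hπ⟩ := exists_isWalk_of_transGen (hirr u (x 0))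
  obtain ⟨s, π', hs, hπ'⟩ := exists_isWalk_of_transGen (hirr (x 0) u)
  have hdetour : ((r : ℤ) + s, cycleWeight f r π + cycleWeight f s π') ∈ closedWalkData f E u :=
    ⟨r + s, _, by omega, hπ.append hπ',
      by rw [cycleWeight_walkAppend f (hπ.2.1.trans hπ'.1.symm)]; simp⟩
  have hloop : ((r : ℤ) + k + s,
      cycleWeight f r π + cycleWeight f k x + cycleWeight f s π') ∈ closedWalkData f E u := by
    have hπx := hπ.append hx.isWalk
    refine ⟨r + k + s, _, by omega, hπx.append hπ', ?_⟩
    rw [cycleWeight_walkAppend f (hπx.2.1.trans hπ'.1.symm),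
      cycleWeight_walkAppend f (hπ.2.1.trans hx.isWalk.1.symm)]
    simp
  convert sub_mem (AddSubgroup.subset_closure hloop) (AddSubgroup.subset_closure hdetour)
    using 1
  exact Prod.ext (by simp only [Prod.fst_sub]; abel) (by simp only [Prod.snd_sub]; abel)

theorem mem_deltaGroup_of_mem_closure_closedWalkData {u : V} {w : Fin ν → ℤ}
    (hw : ((0 : ℤ), w) ∈ AddSubgroup.closure (closedWalkData f E u)) :
    w ∈ DeltaGroup E Set.univ f := by
  obtain ⟨m, x, n, y, hx, hy, hq⟩ := exists_sub_of_mem_closure_closedWalkData hirr hw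
  obtain ⟨hmn, rfl⟩ := Prod.mk.inj hq
  obtain rfl : m = n := by omega
  exact AddSubgroup.subset_closure ⟨m, x, y, hx, hy, rfl⟩

end ClosedWalks


theorem IsPeriod.nonempty {V : Type*} {E : Set (V × V)} {s : Set V} {p : ℕ}
    (hp : IsPeriod E s p) : Nonempty V := by
  by_contra h
  rw [not_nonempty_iff] at h
  have h0 : 0 ∣ p := hp.2.2 0 fun _ x _ => isEmptyElim (x 0)
  exact hp.1.ne' (zero_dvd_iff.mp h0)

section Period

variable {V : Type*} {E : Set (V × V)} {ν : ℕ} {f : V × V → Fin ν → ℤ} {p : ℕ}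
  (hirr : ∀ u v : V, Relation.TransGen (fun a b => (a, b) ∈ E) u v)
include hirr

theorem IsPeriod.natCast_mem_map_fst (hp : IsPeriod E Set.univ p) (u : V) :
    (p : ℤ) ∈ (AddSubgroup.closure (closedWalkData f E u)).map (AddMonoidHom.fst _ _) := by
  obtain ⟨d, hd⟩ := Int.subgroup_cyclic
    ((AddSubgroup.closure (closedWalkData f E u)).map (AddMonoidHom.fst _ _))
  rw [← AddSubgroup.zmultiples_eq_closure] at hd
  have hdvd : ∀ k x, IsCycleIn E Set.univ k x → d.natAbs ∣ k := fun k x hx => by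
    have hk := AddSubgroup.mem_map_of_mem (AddMonoidHom.fst _ _)
      (mem_closure_closedWalkData (f := f) hirr hx u)
    rw [hd, Int.mem_zmultiples_iff] at hk
    exact Int.natAbs_dvd_natAbs.mpr hk
  rw [hd, Int.mem_zmultiples_iff]
  exact Int.natAbs_dvd.mp (Int.natCast_dvd_natCast.mpr (hp.2.2 _ hdvd))

theorem IsPeriod.exists_isCycleIn_length_eq_add (hp : IsPeriod E Set.univ p) (u : V) :
    ∃ k₁ x₁ k₂ x₂, IsCycleIn E Set.univ k₁ x₁ ∧ IsCycleIn E Set.univ k₂ x₂ ∧ k₁ = k₂ + p := by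
  obtain ⟨q, hq, hqp⟩ := AddSubgroup.mem_map.mp
    (hp.natCast_mem_map_fst (f := (0 : V × V → Fin 0 → ℤ)) hirr u)
  obtain ⟨m, x, n, y, hx, hy, rfl⟩ := exists_sub_of_mem_closure_closedWalkData hirr hq
  exact ⟨m, x, n, y, hx, hy, by simp at hqp; omega⟩

theorem gammaGroup_le_deltaGroup_sup_zmultiples
    (hp : ∀ k x, IsCycleIn E Set.univ k x → p ∣ k) {u : V} {c : Fin ν → ℤ}
    (hc : ((p : ℤ), c) ∈ AddSubgroup.closure (closedWalkData f E u)) :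
    GammaGroup E Set.univ f ≤ DeltaGroup E Set.univ f ⊔ AddSubgroup.zmultiples c := by
  refine (AddSubgroup.closure_le _).mpr ?_
  rintro _ ⟨k, x, hx, rfl⟩
  obtain ⟨n, rfl⟩ := hp k x hx
  have hzero : ((0 : ℤ), cycleWeight f (p * n) x - (n : ℤ) • c) ∈
      AddSubgroup.closure (closedWalkData f E u) := by
    convert sub_mem (mem_closure_closedWalkData hirr hx u) (AddSubgroup.zsmul_mem _ hc n) using 1
    simp [mul_comm]
  exact AddSubgroup.mem_sup.mpr ⟨_, mem_deltaGroup_of_mem_closure_closedWalkData hirr hzero, _,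
    AddSubgroup.zsmul_mem_zmultiples c n, sub_add_cancel _ _⟩

end Period

theorem statement11_general {V : Type*} (B : Matrix V V ℝ)
    (hirr : ∀ u v : V, Relation.TransGen (fun a b => (a, b) ∈ Bedges B) u v)
    (p : ℕ) (hp : IsPeriod (Bedges B) Set.univ p)
    (ν : ℕ) (f : V × V → (Fin ν → ℤ)) :
    (∀ k x, IsCycleIn (Bedges B) Set.univ k x → p ∣ k) ∧
    (∃ k₁ x₁ k₂ x₂, IsCycleIn (Bedges B) Set.univ k₁ x₁ ∧
      IsCycleIn (Bedges B) Set.univ k₂ x₂ ∧ k₁ = k₂ + p) ∧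
    ∀ k₁ x₁ k₂ x₂, IsCycleIn (Bedges B) Set.univ k₁ x₁ →
      IsCycleIn (Bedges B) Set.univ k₂ x₂ → k₁ = k₂ + p →
      ∀ y ∈ GammaGroup (Bedges B) Set.univ f, ∃ m : ℤ,
        y - m • (cycleWeight f k₁ x₁ - cycleWeight f k₂ x₂) ∈
          DeltaGroup (Bedges B) Set.univ f := by
  obtain ⟨u⟩ := hp.nonempty
  refine ⟨hp.2.1, hp.exists_isCycleIn_length_eq_add hirr u, ?_⟩
  intro k₁ x₁ k₂ x₂ h₁ h₂ hk y hy
  have hc : ((p : ℤ), cycleWeight f k₁ x₁ - cycleWeight f k₂ x₂) ∈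
      AddSubgroup.closure (closedWalkData f (Bedges B) u) := by
    convert sub_mem (mem_closure_closedWalkData hirr h₁ u) (mem_closure_closedWalkData hirr h₂ u)
      using 1
    simp [hk]
  obtain ⟨δ, hδ, _, ⟨m, rfl⟩, rfl⟩ :=
    AddSubgroup.mem_sup.mp (gammaGroup_le_deltaGroup_sup_zmultiples hirr hp.2.1 hc hy)
  exact ⟨m, by simpa using hδ⟩

/-- Let `B` be an irreducible 0–1 matrix of period `p` with edge set
`E` and let `f : E → ℤ^ν`. Then every cycle of `B` has length a multiple of `p`, there
are cycles `γ, γ′` with `l(γ) − l(γ′) = p`, and `Γ_f/Δ_f` is cyclic, generated by the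
coset of `c = w_f(γ) − w_f(γ′)` for any two such cycles. -/
theorem statement11 {V : Type*} [Fintype V] (B : Matrix V V ℝ)
    (hB01 : ∀ u v, B u v = 0 ∨ B u v = 1)
    (hirr : ∀ u v : V, Relation.TransGen (fun a b => (a, b) ∈ Bedges B) u v)
    (p : ℕ) (hp : IsPeriod (Bedges B) Set.univ p)
    (ν : ℕ) (f : V × V → (Fin ν → ℤ)) :
    (∀ k x, IsCycleIn (Bedges B) Set.univ k x → p ∣ k) ∧
    (∃ k₁ x₁ k₂ x₂, IsCycleIn (Bedges B) Set.univ k₁ x₁ ∧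
      IsCycleIn (Bedges B) Set.univ k₂ x₂ ∧ k₁ = k₂ + p) ∧
    ∀ k₁ x₁ k₂ x₂, IsCycleIn (Bedges B) Set.univ k₁ x₁ →
      IsCycleIn (Bedges B) Set.univ k₂ x₂ → k₁ = k₂ + p →
      ∀ y ∈ GammaGroup (Bedges B) Set.univ f, ∃ m : ℤ,
        y - m • (cycleWeight f k₁ x₁ - cycleWeight f k₂ x₂) ∈
          DeltaGroup (Bedges B) Set.univ f :=
  statement11_general B hirr p hp ν f
end Paper
end
end
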